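/- Let E be a strongly archimedean convex SEA (with its canonical compression base) and let a,b∈E be such that the projection cover a° exists and b is the norm limit of a sequence (b_n) with b_n≤b for each n and b_n=⊕_i λ_{n,i} p_{n,i} for some λ_{n,i}∈[0,1] and sharp elements p_{n,i}. Then a∘b=0 if and only if a°∘b=0. -/

import Mathlib

universe u

/-- An effect algebra: the partially defined sum `⊕` is encoded via `Option`. -/
class EffectAlgebra (E : Type u) where
  oplus : E → E → Option E
  zero : E
  one : E
  oplus_comm : ∀ a b : E, oplus a b = oplus b a
  oplus_assoc : ∀ {a b c ab abc : E}, oplus a b = some ab → oplus ab c = some abc →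
    ∃ bc : E, oplus b c = some bc ∧ oplus a bc = some abc
  exists_perp : ∀ a : E, ∃ b : E, oplus a b = some one
  perp_unique : ∀ {a b c : E}, oplus a b = some one → oplus a c = some one → b = c
  oplus_one : ∀ {a b : E}, oplus a one = some b → a = zero

namespace EffectAlgebra

variable {E : Type u} [EffectAlgebra E]

/-- The orthosupplement `a^⊥`. -/
noncomputable def perp (a : E) : E := Classical.choose (exists_perp a)

/-- The partial order: `a ≤ b` iff `a ⊕ c = b` for some `c`. -/
def le (a b : E) : Prop := ∃ c : E, oplus a c = some b

/-- Sharp elements. -/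
def Sharp (a : E) : Prop := ∀ x : E, le x a → le x (perp a) → x = zero

/-- Finite orthosums of lists of elements. -/
def osum : List E → Option E
  | [] => some zero
  | a :: l => (osum l).bind fun s => oplus a s

/-- Mackey compatibility `a ↔ b`. -/
def MCompat (a b : E) : Prop :=
  ∃ a₁ b₁ c s t : E, oplus a₁ b₁ = some s ∧ oplus s c = some t ∧
    oplus a₁ c = some a ∧ oplus b₁ c = some b

/-- `a` is the supremum of the sequence `f`. -/
def IsSupSeq (f : ℕ → E) (a : E) : Prop :=
  (∀ n, le (f n) a) ∧ ∀ b : E, (∀ n, le (f n) b) → le a b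

/-- `a` is the infimum of the sequence `f`. -/
def IsInfSeq (f : ℕ → E) (a : E) : Prop :=
  (∀ n, le a (f n)) ∧ ∀ b : E, (∀ n, le b (f n)) → le b a

/-- `a` is the infimum of the set `S`. -/
def IsInfSet (S : Set E) (a : E) : Prop :=
  (∀ x ∈ S, le a x) ∧ ∀ b : E, (∀ x ∈ S, le b x) → le b a

/-- `a` is the supremum of `f` computed inside the subset `S`. -/
def IsSupSeqIn (S : Set E) (f : ℕ → E) (a : E) : Prop :=
  a ∈ S ∧ (∀ n, le (f n) a) ∧ ∀ b ∈ S, (∀ n, le (f n) b) → le a b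

variable (E) in
/-- Monotone σ-completeness: every ascending sequence has a supremum. -/
def MonotoneSigmaComplete : Prop :=
  ∀ f : ℕ → E, (∀ n, le (f n) (f (n + 1))) → ∃ a : E, IsSupSeq f a

end EffectAlgebra

open EffectAlgebra in
/-- A compression base `(J_p)_{p ∈ P}` on an effect algebra. -/
structure CompressionBase (E : Type u) [EffectAlgebra E] where
  P : Set E
  J : E → E → E
  zero_mem : zero ∈ P
  one_mem : one ∈ P
  perp_mem : ∀ p ∈ P, perp p ∈ P
  oplus_mem : ∀ p ∈ P, ∀ q ∈ P, ∀ r : E, oplus p q = some r → r ∈ P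
  normal : ∀ e f d s t x y : E, oplus e f = some s → oplus s d = some t →
    oplus e d = some x → x ∈ P → oplus f d = some y → y ∈ P → d ∈ P
  additive : ∀ p ∈ P, ∀ a b c : E, oplus a b = some c →
    oplus (J p a) (J p b) = some (J p c)
  retraction : ∀ p ∈ P, ∀ a : E, le a p → J p a = a
  focus : ∀ p ∈ P, J p one = p
  compression : ∀ p ∈ P, ∀ a : E, (J p a = zero ↔ le a (perp p))
  compose : ∀ p ∈ P, ∀ q ∈ P, ∀ r ∈ P, ∀ s t qr : E,
    oplus p q = some s → oplus s r = some t → oplus q r = some qr →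
    ∀ a : E, J s (J qr a) = J q a

namespace CompressionBase

open EffectAlgebra

variable {E : Type u} [EffectAlgebra E] (cb : CompressionBase E)

/-- The commutant `C(p)` of a projection `p`. -/
noncomputable def Cset (p : E) : Set E :=
  {a : E | oplus (cb.J p a) (cb.J (perp p) a) = some a}

/-- `PC(a)`: projections compatible with `a`. -/
noncomputable def PC (a : E) : Set E := {p : E | p ∈ cb.P ∧ a ∈ cb.Cset p}

/-- The P-bicommutant `P(a) = PC(PC(a) ∪ {a})`. -/
noncomputable def Pbicomm (a : E) : Set E :=
  {p : E | p ∈ cb.P ∧ a ∈ cb.Cset p ∧ ∀ q ∈ cb.PC a, q ∈ cb.Cset p}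

/-- `p` is the projection cover of `a`. -/
def IsProjCover (a p : E) : Prop :=
  p ∈ cb.P ∧ ∀ q ∈ cb.P, (le a q ↔ le p q)

/-- The projection cover property. -/
def ProjCoverProp : Prop := ∀ a : E, ∃ p : E, cb.IsProjCover a p

/-- `B` is a Boolean subalgebra of the set of projections. -/
noncomputable def BooleanSub (B : Set E) : Prop :=
  B ⊆ cb.P ∧ zero ∈ B ∧ one ∈ B ∧ (∀ p ∈ B, perp p ∈ B) ∧
  (∀ p ∈ B, ∀ q ∈ B, MCompat p q) ∧
  (∀ p ∈ B, ∀ q ∈ B, ∀ r : E, oplus p q = some r → r ∈ B)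

/-- The b-property. -/
noncomputable def BProperty : Prop :=
  ∀ a : E, ∃ B : Set E, cb.BooleanSub B ∧
    ∀ p ∈ cb.P, (a ∈ cb.Cset p ↔ ∀ b ∈ B, b ∈ cb.Cset p)

/-- Commutativity `aCb` of b-elements. -/
noncomputable def CommuteC (a b : E) : Prop :=
  ∀ p ∈ cb.Pbicomm a, ∀ q ∈ cb.Pbicomm b, MCompat p q

/-- The b-comparability property. -/
noncomputable def BComparability : Prop :=
  cb.BProperty ∧
  ∀ e f : E, cb.CommuteC e f → ∃ p : E, p ∈ cb.Pbicomm e ∧ p ∈ cb.Pbicomm f ∧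
    le (cb.J p e) (cb.J p f) ∧ le (cb.J (perp p) f) (cb.J (perp p) e)

/-- Spectrality: projection cover property plus b-comparability. -/
noncomputable def Spectral : Prop := cb.ProjCoverProp ∧ cb.BComparability

/-- `p` is the floor of `a` (the largest projection below `a`). -/
def IsFloor (a p : E) : Prop :=
  p ∈ cb.P ∧ le p a ∧ ∀ q ∈ cb.P, le q a → le q p

end CompressionBase

open EffectAlgebra in
/-- A sequential effect algebra (SEA). -/
class SEA (E : Type u) [EffectAlgebra E] where
  seq : E → E → E
  seq_oplus : ∀ a b c d : E, oplus b c = some d →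
    oplus (seq a b) (seq a c) = some (seq a d)
  one_seq : ∀ a : E, seq one a = a
  seq_zero_symm : ∀ a b : E, seq a b = zero → seq b a = zero
  comm_perp : ∀ a b : E, seq a b = seq b a → seq a (perp b) = seq (perp b) a
  comm_assoc : ∀ a b c : E, seq a b = seq b a → seq a (seq b c) = seq (seq a b) c
  comm_seq : ∀ a b c : E, seq c a = seq a c → seq c b = seq b c →
    seq c (seq a b) = seq (seq a b) c
  comm_oplus : ∀ a b c d : E, seq c a = seq a c → seq c b = seq b c →
    oplus a b = some d → seq c d = seq d c

namespace EffectAlgebra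

variable {E : Type u} [EffectAlgebra E]

section SEAdefs

variable [SEA E]

/-- `a | b` : the sequential product commutes. -/
def Commutes (a b : E) : Prop := SEA.seq a b = SEA.seq b a

/-- The commutant `S'` of a subset. -/
def commutant (S : Set E) : Set E := {a : E | ∀ s ∈ S, Commutes a s}

/-- The bicommutant `S''`. -/
def bicommutant (S : Set E) : Set E := commutant (commutant S)

/-- A sub-SEA: a sub-effect algebra closed under the sequential product. -/
noncomputable def SubSEA (S : Set E) : Prop :=
  zero ∈ S ∧ one ∈ S ∧ (∀ a ∈ S, perp a ∈ S) ∧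
  (∀ a ∈ S, ∀ b ∈ S, ∀ c : E, oplus a b = some c → c ∈ S) ∧
  (∀ a ∈ S, ∀ b ∈ S, SEA.seq a b ∈ S)

/-- A commutative sub-SEA. -/
noncomputable def CommSubSEA (S : Set E) : Prop :=
  SubSEA S ∧ ∀ a ∈ S, ∀ b ∈ S, Commutes a b

/-- A maximal commutative sub-SEA. -/
noncomputable def MaxCommSubSEA (S : Set E) : Prop :=
  CommSubSEA S ∧ ∀ T : Set E, CommSubSEA T → S ⊆ T → T = S

/-- `C(p)` for the canonical compression base `J_p = p ∘ ·` of a SEA. -/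
noncomputable def sC (p : E) : Set E :=
  {a : E | oplus (SEA.seq p a) (SEA.seq (perp p) a) = some a}

/-- `PC(a)` for the canonical compression base. -/
noncomputable def sPC (a : E) : Set E := {p : E | Sharp p ∧ a ∈ sC p}

/-- The P-bicommutant `P(a)` for the canonical compression base. -/
noncomputable def sPbicomm (a : E) : Set E :=
  {p : E | Sharp p ∧ a ∈ sC p ∧ ∀ q ∈ sPC a, q ∈ sC p}

/-- `p` is the projection cover of `a` (canonical compression base). -/
noncomputable def sIsProjCover (a p : E) : Prop :=
  Sharp p ∧ ∀ q : E, Sharp q → (le a q ↔ le p q)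

variable (E) in
/-- The projection cover property (canonical compression base). -/
noncomputable def sProjCoverProp : Prop := ∀ a : E, ∃ p : E, sIsProjCover a p

/-- `B` is a Boolean subalgebra of the sharp elements. -/
noncomputable def sBooleanSub (B : Set E) : Prop :=
  (∀ p ∈ B, Sharp p) ∧ zero ∈ B ∧ one ∈ B ∧ (∀ p ∈ B, perp p ∈ B) ∧
  (∀ p ∈ B, ∀ q ∈ B, MCompat p q) ∧
  (∀ p ∈ B, ∀ q ∈ B, ∀ r : E, oplus p q = some r → r ∈ B)

variable (E) in
/-- The b-property (canonical compression base). -/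
noncomputable def sBProperty : Prop :=
  ∀ a : E, ∃ B : Set E, sBooleanSub B ∧
    ∀ p : E, Sharp p → (a ∈ sC p ↔ ∀ b ∈ B, b ∈ sC p)

/-- `aCb` (canonical compression base). -/
noncomputable def sCommuteC (a b : E) : Prop :=
  ∀ p ∈ sPbicomm a, ∀ q ∈ sPbicomm b, MCompat p q

variable (E) in
/-- The b-comparability property (canonical compression base). -/
noncomputable def sBComparability : Prop :=
  sBProperty E ∧
  ∀ e f : E, sCommuteC e f → ∃ p : E, p ∈ sPbicomm e ∧ p ∈ sPbicomm f ∧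
    le (SEA.seq p e) (SEA.seq p f) ∧
    le (SEA.seq (perp p) f) (SEA.seq (perp p) e)

variable (E) in
/-- Spectrality of a SEA with respect to its canonical compression base. -/
noncomputable def sSpectral : Prop := sProjCoverProp E ∧ sBComparability E

/-- `p` is the floor of `a` (canonical compression base). -/
noncomputable def sIsFloor (a p : E) : Prop :=
  Sharp p ∧ le p a ∧ ∀ q : E, Sharp q → le q a → le q p

variable (E) in
/-- Property A. -/
def PropertyA : Prop :=
  ∀ (f : ℕ → E) (a b : E), (∀ n, le (f n) (f (n + 1))) →
    (∀ m n, Commutes (f m) (f n)) → IsSupSeq f a →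
    (∀ n, Commutes (f n) b) → Commutes a b

variable (E) in
/-- A σ-SEA. -/
def SigmaSEA : Prop :=
  MonotoneSigmaComplete E ∧
  ∀ (f : ℕ → E) (m : E), (∀ n, le (f (n + 1)) (f n)) → IsInfSeq f m →
    ∀ b : E, IsInfSeq (fun n => SEA.seq b (f n)) (SEA.seq b m) ∧
      ((∀ n, Commutes b (f n)) → Commutes b m)

/-- Iterated sequential powers: `seqPow a n = a^(n+1)`. -/
def seqPow (a : E) : ℕ → E
  | 0 => a
  | n + 1 => SEA.seq a (seqPow a n)

end SEAdefs

end EffectAlgebra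

open EffectAlgebra in
/-- A convex effect algebra: scalar multiplication by reals in `[0,1]`. -/
class ConvexEA (E : Type u) [EffectAlgebra E] where
  smul : ℝ → E → E
  smul_smul : ∀ (l m : ℝ) (a : E), 0 ≤ l → l ≤ 1 → 0 ≤ m → m ≤ 1 →
    smul m (smul l a) = smul (l * m) a
  smul_add_coeff : ∀ (l m : ℝ) (a : E), 0 ≤ l → 0 ≤ m → l + m ≤ 1 →
    oplus (smul l a) (smul m a) = some (smul (l + m) a)
  smul_oplus : ∀ (l : ℝ) (a b c : E), 0 ≤ l → l ≤ 1 → oplus a b = some c →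
    oplus (smul l a) (smul l b) = some (smul l c)
  one_smul : ∀ a : E, smul 1 a = a

namespace EffectAlgebra

variable {E : Type u} [EffectAlgebra E]

section Convexdefs

variable [ConvexEA E]

variable (E) in
/-- Strong archimedeanity. -/
def StronglyArchimedean : Prop :=
  ∀ a b c : E,
    (∀ n : ℕ, ∃ d : E, oplus b (ConvexEA.smul (1 / (n + 1) : ℝ) c) = some d ∧ le a d) →
    le a b

/-- `DistLE a b ε` encodes `‖a - b‖ ≤ ε` in the order unit norm:
`(1/2)a ≤ (1/2)b ⊕ (ε/2)1` and symmetrically (with `ε` clamped to `[0,1]`). -/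
def DistLE (a b : E) (ε : ℝ) : Prop :=
  (∃ d : E, oplus (ConvexEA.smul (2⁻¹ : ℝ) b) (ConvexEA.smul (min ε 1 / 2) one) = some d ∧
    le (ConvexEA.smul (2⁻¹ : ℝ) a) d) ∧
  (∃ d : E, oplus (ConvexEA.smul (2⁻¹ : ℝ) a) (ConvexEA.smul (min ε 1 / 2) one) = some d ∧
    le (ConvexEA.smul (2⁻¹ : ℝ) b) d)

/-- Norm convergence of a sequence. -/
def NormLimit (f : ℕ → E) (a : E) : Prop :=
  ∀ ε : ℝ, 0 < ε → ∃ N : ℕ, ∀ n ≥ N, DistLE (f n) a ε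

/-- Cauchy sequences with respect to the order unit norm. -/
def CauchySeqE (f : ℕ → E) : Prop :=
  ∀ ε : ℝ, 0 < ε → ∃ N : ℕ, ∀ m ≥ N, ∀ n ≥ N, DistLE (f m) (f n) ε

variable (E) in
/-- Norm completeness. -/
def NormComplete : Prop := ∀ f : ℕ → E, CauchySeqE f → ∃ a : E, NormLimit f a

/-- A norm-closed subset. -/
def NormClosedSet (S : Set E) : Prop :=
  ∀ (f : ℕ → E) (a : E), (∀ n, f n ∈ S) → NormLimit f a → a ∈ S

/-- A norm-complete subset. -/
def NormCompleteSet (S : Set E) : Prop :=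
  ∀ f : ℕ → E, (∀ n, f n ∈ S) → CauchySeqE f → ∃ a ∈ S, NormLimit f a

/-- One-dimensional elements. -/
def OneDim (a : E) : Prop :=
  ∀ b : E, le b a → ∃ t : ℝ, 0 ≤ t ∧ t ≤ 1 ∧ b = ConvexEA.smul t a

/-- `l` is a representation of `a` as a simple element:
`a = ⊕ μ_i p_i` with `μ_i ∈ [0,1]`, `p_i` sharp and `⊕ p_i = 1`. -/
noncomputable def SimpleRep (a : E) (l : List (ℝ × E)) : Prop :=
  (∀ x ∈ l, x.1 ∈ Set.Icc (0 : ℝ) 1 ∧ Sharp x.2) ∧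
  osum (l.map Prod.snd) = some one ∧
  osum (l.map fun x => ConvexEA.smul x.1 x.2) = some a

/-- Simple elements. -/
noncomputable def SimpleElem (a : E) : Prop := ∃ l : List (ℝ × E), SimpleRep a l

/-- A reduced representation: strictly increasing coefficients, nonzero sharp elements. -/
noncomputable def ReducedRep (a : E) (l : List (ℝ × E)) : Prop :=
  SimpleRep a l ∧ (l.map Prod.fst).Chain' (· < ·) ∧ ∀ x ∈ l, x.2 ≠ zero

end Convexdefs

section SpecRes

variable [SEA E] [ConvexEA E]

/-- `p` is the spectral resolution of `a` (canonical compression base): a family of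
projections in the bicommutant of `a`, nondecreasing and right continuous on `[0,1]`,
with `J_{p_λ}(a) ≤ λ p_λ` and `λ p_λ^⊥ ≤ J_{p_λ^⊥}(a)`. -/
noncomputable def sIsSpecRes (a : E) (p : ℝ → E) : Prop :=
  (∀ l : ℝ, 0 ≤ l → l ≤ 1 → p l ∈ sPbicomm a) ∧
  (∀ l m : ℝ, 0 ≤ l → l ≤ m → m ≤ 1 → le (p l) (p m)) ∧
  (∀ l : ℝ, 0 ≤ l → l < 1 →
    IsInfSet {x : E | ∃ m : ℝ, l < m ∧ m ≤ 1 ∧ x = p m} (p l)) ∧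
  (∀ l : ℝ, 0 ≤ l → l ≤ 1 →
    le (SEA.seq (p l) a) (ConvexEA.smul l (p l)) ∧
    le (ConvexEA.smul l (perp (p l))) (SEA.seq (perp (p l)) a))

end SpecRes

end EffectAlgebra

namespace CompressionBase

open EffectAlgebra

variable {E : Type u} [EffectAlgebra E] [ConvexEA E] (cb : CompressionBase E)

/-- `p` is the spectral resolution of `a` with respect to the compression base `cb`. -/
noncomputable def IsSpecRes (a : E) (p : ℝ → E) : Prop :=
  (∀ l : ℝ, 0 ≤ l → l ≤ 1 → p l ∈ cb.Pbicomm a) ∧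
  (∀ l m : ℝ, 0 ≤ l → l ≤ m → m ≤ 1 → le (p l) (p m)) ∧
  (∀ l : ℝ, 0 ≤ l → l < 1 →
    IsInfSet {x : E | ∃ m : ℝ, l < m ∧ m ≤ 1 ∧ x = p m} (p l)) ∧
  (∀ l : ℝ, 0 ≤ l → l ≤ 1 →
    le (cb.J (p l) a) (ConvexEA.smul l (p l)) ∧
    le (ConvexEA.smul l (perp (p l))) (cb.J (perp (p l)) a))

end CompressionBase

/-!
If `a ∘ b = 0`, then `a ∘ b_n = 0`, so every summand `λ q` of `b_n` with `λ > 0` satisfies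
`a ∘ q = 0`, that is `a ≤ q^⊥`. As `q^⊥` is sharp, the projection cover gives `a° ≤ q^⊥`, hence
`a° ∘ b_n = 0`, that is `b_n ≤ a°^⊥`. In a strongly archimedean convex effect algebra the
order interval below an element is norm closed, so `b ≤ a°^⊥` and `a° ∘ b = 0`.
Conversely `a ≤ a°` gives `b ∘ a ≤ b ∘ a° = 0`.
-/

namespace EffectAlgebra

variable {E : Type u} [EffectAlgebra E]

section Order

theorem oplus_perp (a : E) : oplus a (perp a) = some one :=
  Classical.choose_spec (exists_perp a)

theorem oplus_zero (a : E) : oplus a zero = some a := by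
  obtain ⟨z, hz⟩ := exists_perp (one : E)
  have hz0 : z = zero := oplus_one (by rw [oplus_comm]; exact hz)
  have hperp : oplus (perp a) a = some one := by rw [oplus_comm]; exact oplus_perp a
  obtain ⟨c, hc, hpc⟩ := oplus_assoc hperp (hz0 ▸ hz)
  rwa [perp_unique hpc hperp] at hc

theorem zero_oplus (a : E) : oplus zero a = some a := by
  rw [oplus_comm]; exact oplus_zero a

theorem oplus_rotate {a b c u t : E} (h₁ : oplus b c = some u) (h₂ : oplus a u = some t) :
    ∃ s, oplus c a = some s ∧ oplus b s = some t := by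
  rw [oplus_comm] at h₂
  exact oplus_assoc h₁ h₂

theorem oplus_left_cancel {a b c d : E} (h₁ : oplus a b = some d) (h₂ : oplus a c = some d) :
    b = c := by
  rw [oplus_comm] at h₁ h₂
  obtain ⟨u, hu, hbu⟩ := oplus_assoc h₁ (oplus_perp d)
  obtain ⟨u', hu', hcu⟩ := oplus_assoc h₂ (oplus_perp d)
  obtain rfl : u = u' := Option.some.inj (hu.symm.trans hu')
  rw [oplus_comm] at hbu hcu
  exact perp_unique hbu hcu

theorem le.refl (a : E) : le a a := ⟨zero, oplus_zero a⟩

theorem le.trans {a b c : E} (h₁ : le a b) (h₂ : le b c) : le a c := by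
  obtain ⟨x, hx⟩ := h₁
  obtain ⟨y, hy⟩ := h₂
  obtain ⟨u, -, h⟩ := oplus_assoc hx hy
  exact ⟨u, h⟩

protected theorem le_one (a : E) : le a one := ⟨perp a, oplus_perp a⟩

theorem le.eq_zero {x : E} (h : le x zero) : x = zero := by
  obtain ⟨y, hy⟩ := h
  have hzero_one : oplus (zero : E) one = some one := zero_oplus one
  obtain ⟨u, hu, -⟩ := oplus_assoc hy hzero_one
  obtain rfl : y = zero := oplus_one hu
  exact Option.some.inj ((oplus_zero x).symm.trans hy)

theorem perp_perp (a : E) : perp (perp a) = a :=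
  perp_unique (oplus_perp (perp a)) (by rw [oplus_comm]; exact oplus_perp a)

theorem sharp_perp {q : E} (hq : Sharp q) : Sharp (perp q) := fun x h₁ h₂ =>
  hq x (perp_perp q ▸ h₂) h₁

theorem oplus_le_oplus_left {x x' y s t : E} (h : le x x') (hs : oplus x y = some s)
    (ht : oplus x' y = some t) : le s t := by
  obtain ⟨c, hc⟩ := h
  rw [oplus_comm] at ht
  obtain ⟨s₁, hs₁, hxs₁⟩ := oplus_rotate hc ht
  obtain ⟨s₂, hs₂, hcs₂⟩ := oplus_rotate hs₁ hxs₁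
  rw [oplus_comm, hs] at hs₂
  rw [← Option.some.inj hs₂, oplus_comm] at hcs₂
  exact ⟨c, hcs₂⟩

theorem exists_oplus_of_le_right {x y z t : E} (h : le z y) (ht : oplus x y = some t) :
    ∃ s, oplus x z = some s ∧ le s t := by
  obtain ⟨c, hc⟩ := h
  obtain ⟨s₁, hs₁, hz₁⟩ := oplus_rotate hc ht
  obtain ⟨s₂, hs₂, hcs₂⟩ := oplus_rotate hs₁ hz₁
  exact ⟨s₂, hs₂, c, by rw [oplus_comm]; exact hcs₂⟩

theorem exists_oplus_of_le {x x' y y' t : E} (hx : le x x') (hy : le y y')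
    (ht : oplus x' y' = some t) : ∃ s, oplus x y = some s ∧ le s t := by
  obtain ⟨s₁, hs₁, hs₁t⟩ := exists_oplus_of_le_right hy ht
  rw [oplus_comm] at hs₁
  obtain ⟨s, hs, hss₁⟩ := exists_oplus_of_le_right hx hs₁
  exact ⟨s, by rw [oplus_comm]; exact hs, hss₁.trans hs₁t⟩

theorem le_of_mem_osum {l : List E} {s x : E} (h : osum l = some s) (hx : x ∈ l) : le x s := by
  induction l generalizing s with
  | nil => cases hx
  | cons a t ih =>
    obtain ⟨s', ht, has'⟩ := Option.bind_eq_some_iff.mp h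
    rcases List.mem_cons.mp hx with rfl | hx
    · exact ⟨s', has'⟩
    · exact (ih ht hx).trans ⟨a, by rw [oplus_comm]; exact has'⟩

end Order

section Sequential

variable [SEA E]

theorem seq_le_seq (a : E) {x y : E} (h : le x y) : le (SEA.seq a x) (SEA.seq a y) := by
  obtain ⟨c, hc⟩ := h
  exact ⟨SEA.seq a c, SEA.seq_oplus a x c y hc⟩

theorem seq_zero (a : E) : SEA.seq a zero = zero :=
  oplus_left_cancel (SEA.seq_oplus a zero zero zero (oplus_zero zero)) (oplus_zero _)

theorem seq_one (a : E) : SEA.seq a one = a := by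
  rw [SEA.comm_oplus a (perp a) a one rfl (SEA.comm_perp a a rfl) (oplus_perp a), SEA.one_seq]

theorem seq_le_left (a b : E) : le (SEA.seq a b) a := by
  have h := SEA.seq_oplus a b (perp b) one (oplus_perp b)
  rw [seq_one] at h
  exact ⟨_, h⟩

theorem seq_eq_zero_of_le {a x y : E} (h : le x y) (hy : SEA.seq a y = zero) :
    SEA.seq a x = zero :=
  le.eq_zero (hy ▸ seq_le_seq a h)

theorem seq_eq_zero_of_oplus {a x y z : E} (hz : oplus x y = some z)
    (hx : SEA.seq a x = zero) (hy : SEA.seq a y = zero) : SEA.seq a z = zero := by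
  have h := SEA.seq_oplus a x y z hz
  rw [hx, hy, oplus_zero] at h
  exact (Option.some.inj h).symm

theorem seq_osum_eq_zero {a s : E} {l : List E} (h : osum l = some s)
    (hl : ∀ x ∈ l, SEA.seq a x = zero) : SEA.seq a s = zero := by
  induction l generalizing s with
  | nil => rw [← Option.some.inj h, seq_zero]
  | cons x t ih =>
    obtain ⟨s', ht, hxs'⟩ := Option.bind_eq_some_iff.mp h
    exact seq_eq_zero_of_oplus hxs' (hl x List.mem_cons_self)
      (ih ht fun y hy => hl y (List.mem_cons_of_mem x hy))

-- `p ∘ x = 0` forces `x ∘ p = 0`, so `x` commutes with `p`, hence with `p^⊥`, and then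
-- `x = x ∘ p^⊥ = p^⊥ ∘ x ≤ p^⊥`.
theorem le_perp_of_seq_eq_zero {p x : E} (h : SEA.seq p x = zero) : le x (perp p) := by
  have hxp : SEA.seq x p = zero := SEA.seq_zero_symm p x h
  have hcomm := SEA.comm_perp x p (hxp.trans h.symm)
  have hsum := SEA.seq_oplus x p (perp p) one (oplus_perp p)
  rw [seq_one, hxp, zero_oplus] at hsum
  have hle := seq_le_left (perp p) x
  rwa [← hcomm, Option.some.inj hsum] at hle

theorem Sharp.seq_perp_self {p : E} (hp : Sharp p) : SEA.seq p (perp p) = zero :=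
  hp _ (seq_le_left p (perp p)) (SEA.comm_perp p p rfl ▸ seq_le_left (perp p) p)

theorem Sharp.seq_eq_zero_iff {p x : E} (hp : Sharp p) :
    SEA.seq p x = zero ↔ le x (perp p) :=
  ⟨le_perp_of_seq_eq_zero, fun h => seq_eq_zero_of_le h hp.seq_perp_self⟩

end Sequential

section Convex

variable [ConvexEA E]

open ConvexEA

protected theorem zero_smul (x : E) : smul (0 : ℝ) x = zero := by
  have h := smul_add_coeff 0 0 x le_rfl le_rfl (by norm_num)
  rw [add_zero] at h
  exact oplus_left_cancel h (oplus_zero _)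

theorem smul_le_smul_of_le_coeff {s t : ℝ} (hs : 0 ≤ s) (hst : s ≤ t) (ht : t ≤ 1) (x : E) :
    le (smul s x) (smul t x) := by
  have h := smul_add_coeff s (t - s) x hs (by linarith) (by linarith)
  rw [add_sub_cancel] at h
  exact ⟨_, h⟩

theorem smul_le_smul_of_le {t : ℝ} (h₀ : 0 ≤ t) (h₁ : t ≤ 1) {x y : E} (h : le x y) :
    le (smul t x) (smul t y) := by
  obtain ⟨c, hc⟩ := h
  exact ⟨smul t c, smul_oplus t x c y h₀ h₁ hc⟩

theorem half_oplus_half (x : E) : oplus (smul (2⁻¹ : ℝ) x) (smul (2⁻¹ : ℝ) x) = some x := by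
  have h := smul_add_coeff 2⁻¹ 2⁻¹ x (by norm_num) (by norm_num) (by norm_num)
  rwa [show (2⁻¹ + 2⁻¹ : ℝ) = 1 by norm_num, ConvexEA.one_smul] at h

theorem le_of_half_le_half {x y : E} (h : le (smul (2⁻¹ : ℝ) x) (smul (2⁻¹ : ℝ) y)) :
    le x y := by
  obtain ⟨c, hc⟩ := h
  obtain ⟨u, hu, hcu⟩ := oplus_assoc hc (half_oplus_half y)
  obtain ⟨v, hv, hv'⟩ := oplus_rotate hc hu
  obtain ⟨w, hw, hw'⟩ := oplus_rotate hv' hcu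
  obtain ⟨z, hz, hz'⟩ := oplus_rotate hw hw'
  rw [← Option.some.inj ((half_oplus_half x).symm.trans hz), oplus_comm] at hz'
  exact ⟨v, hz'⟩

theorem le_of_normLimit (harch : StronglyArchimedean E) {f : ℕ → E} {b c : E}
    (hfc : ∀ n, le (f n) c) (hlim : NormLimit f b) : le b c := by
  refine le_of_half_le_half (harch _ _ (smul (2⁻¹ : ℝ) one) fun n => ?_)
  set ε : ℝ := 1 / ((n : ℝ) + 1)
  have hε₀ : 0 < ε := by positivity
  have hε₁ : ε ≤ 1 := div_le_one_of_le₀ (by linarith [n.cast_nonneg (α := ℝ)]) (by positivity)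
  obtain ⟨N, hN⟩ := hlim ε hε₀
  obtain ⟨-, d₀, hd₀, hbd₀⟩ := hN N le_rfl
  rw [min_eq_left hε₁] at hd₀
  rw [smul_smul _ _ _ (by norm_num) (by norm_num) hε₀.le hε₁, show 2⁻¹ * ε = ε / 2 by ring]
  obtain ⟨d, hd, -⟩ := exists_oplus_of_le (smul_le_smul_of_le (by norm_num) (by norm_num)
    (EffectAlgebra.le_one c)) (smul_le_smul_of_le_coeff (s := ε / 2) (t := 2⁻¹) (by positivity) (by linarith) (by norm_num)
    one) (half_oplus_half (one : E))
  exact ⟨d, hd, hbd₀.trans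
    (oplus_le_oplus_left (smul_le_smul_of_le (by norm_num) (by norm_num) (hfc N)) hd₀ hd)⟩

variable [SEA E]

theorem seq_smul_nat_mul_eq_zero {a q : E} {c : ℝ} (hc : 0 ≤ c)
    (h : SEA.seq a (smul c q) = zero) :
    ∀ k : ℕ, k * c ≤ 1 → SEA.seq a (smul (k * c) q) = zero
  | 0, _ => by rw [Nat.cast_zero, zero_mul, EffectAlgebra.zero_smul, seq_zero]
  | k + 1, hk => by
    have hkc : (k : ℝ) * c + c ≤ 1 := by push_cast at hk; linarith
    have hsum := smul_add_coeff (k * c) c q (by positivity) hc hkc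
    rw [show (k : ℝ) * c + c = ((k + 1 : ℕ) : ℝ) * c by push_cast; ring] at hsum
    exact seq_eq_zero_of_oplus hsum (seq_smul_nat_mul_eq_zero hc h k (by linarith)) h

theorem seq_eq_zero_of_seq_smul {a q : E} {t : ℝ} (ht₀ : 0 < t) (ht₁ : t ≤ 1)
    (h : SEA.seq a (smul t q) = zero) : SEA.seq a q = zero := by
  obtain ⟨n, hn⟩ := exists_nat_one_div_lt ht₀
  set c : ℝ := 1 / ((n : ℝ) + 1)
  have hc : 0 < c := by positivity
  have hnc : ((n + 1 : ℕ) : ℝ) * c = 1 := by simp only [c]; push_cast; field_simp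
  have hcq : SEA.seq a (smul c q) = zero :=
    seq_eq_zero_of_le (smul_le_smul_of_le_coeff hc.le hn.le ht₁ q) h
  have hq := seq_smul_nat_mul_eq_zero hc.le hcq (n + 1) hnc.le
  rwa [hnc, ConvexEA.one_smul] at hq

theorem sIsProjCover.seq_smul_eq_zero {a p q : E} {t : ℝ} (hcov : sIsProjCover a p)
    (hq : Sharp q) (ht₀ : 0 ≤ t) (ht₁ : t ≤ 1) (h : SEA.seq a (smul t q) = zero) :
    SEA.seq p (smul t q) = zero := by
  rcases ht₀.eq_or_lt with rfl | ht₀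
  · rw [EffectAlgebra.zero_smul, seq_zero]
  have haq : le a (perp q) :=
    hq.seq_eq_zero_iff.1 (SEA.seq_zero_symm a q (seq_eq_zero_of_seq_smul ht₀ ht₁ h))
  have hpq : le p (perp q) := (hcov.2 _ (sharp_perp hq)).1 haq
  have hqp : SEA.seq q p = zero := hq.seq_eq_zero_iff.2 hpq
  have htq : le (smul t q) q := by
    simpa only [ConvexEA.one_smul] using smul_le_smul_of_le_coeff ht₀.le ht₁ le_rfl q
  exact seq_eq_zero_of_le htq (SEA.seq_zero_symm q p hqp)

end Convex

end EffectAlgebra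

open EffectAlgebra in
/-- if `a°` exists and `b` is the norm limit of a sequence of elements
`b_n ≤ b` of the form `⊕_i λ_{n,i} p_{n,i}` with `λ_{n,i} ∈ [0,1]` and `p_{n,i}` sharp,
then `a ∘ b = 0 ↔ a° ∘ b = 0`. -/
theorem stmt6 {E : Type u} [EffectAlgebra E] [SEA E] [ConvexEA E]
    (harch : StronglyArchimedean E) (a p b : E) (hcov : sIsProjCover a p)
    (f : ℕ → E) (hfb : ∀ n, le (f n) b) (hlim : NormLimit f b)
    (hsimple : ∀ n, ∃ l : List (ℝ × E),
      (∀ x ∈ l, x.1 ∈ Set.Icc (0 : ℝ) 1 ∧ Sharp x.2) ∧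
      osum (l.map fun x => ConvexEA.smul x.1 x.2) = some (f n)) :
    SEA.seq a b = zero ↔ SEA.seq p b = zero := by
  have hp : Sharp p := hcov.1
  constructor
  · intro hab
    have hfp : ∀ n, le (f n) (perp p) := fun n => by
      obtain ⟨l, hl, hsum⟩ := hsimple n
      refine hp.seq_eq_zero_iff.1 (seq_osum_eq_zero hsum fun y hy => ?_)
      obtain ⟨x, hx, rfl⟩ := List.mem_map.1 hy
      obtain ⟨⟨hx₀, hx₁⟩, hxs⟩ := hl x hx
      exact hcov.seq_smul_eq_zero hxs hx₀ hx₁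
        (seq_eq_zero_of_le ((le_of_mem_osum hsum hy).trans (hfb n)) hab)
    exact hp.seq_eq_zero_iff.2 (le_of_normLimit harch hfp hlim)
  · intro hpb
    have hap : le a p := (hcov.2 p hp).2 (le.refl p)
    exact SEA.seq_zero_symm b a (seq_eq_zero_of_le hap (SEA.seq_zero_symm p b hpb))
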